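/- Let (H,R,χ) be a pre-Cartier quasitriangular bialgebra. Then R₁₂⁻¹χ₁₃R₁₂ = R₂₃⁻¹χ₁₃R₂₃ in H⊗H⊗H. -/

import Mathlib

open scoped TensorProduct

noncomputable section

variable (k H : Type*) [CommRing k] [Ring H] [Bialgebra k H]

/-- leg embedding `a ⊗ b ↦ a ⊗ b ⊗ 1` into `H ⊗ (H ⊗ H)`. -/
def leg12 : H ⊗[k] H →ₐ[k] H ⊗[k] (H ⊗[k] H) :=
  Algebra.TensorProduct.map (AlgHom.id k H) Algebra.TensorProduct.includeLeft

/-- leg embedding `a ⊗ b ↦ 1 ⊗ a ⊗ b`. -/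
def leg23 : H ⊗[k] H →ₐ[k] H ⊗[k] (H ⊗[k] H) :=
  Algebra.TensorProduct.includeRight

/-- leg embedding `a ⊗ b ↦ a ⊗ 1 ⊗ b`. -/
def leg13 : H ⊗[k] H →ₐ[k] H ⊗[k] (H ⊗[k] H) :=
  Algebra.TensorProduct.map (AlgHom.id k H) Algebra.TensorProduct.includeRight

/-- `(Id ⊗ Δ)` as an algebra map `H ⊗ H → H ⊗ (H ⊗ H)`. -/
def idComul : H ⊗[k] H →ₐ[k] H ⊗[k] (H ⊗[k] H) :=
  Algebra.TensorProduct.map (AlgHom.id k H) (Bialgebra.comulAlgHom k H)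

/-- `(Δ ⊗ Id)` as an algebra map `H ⊗ H → H ⊗ (H ⊗ H)` (after reassociation). -/
def comulId : H ⊗[k] H →ₐ[k] H ⊗[k] (H ⊗[k] H) :=
  (Algebra.TensorProduct.assoc k k k H H H).toAlgHom.comp
    (Algebra.TensorProduct.map (Bialgebra.comulAlgHom k H) (AlgHom.id k H))

/-- the flip `a ⊗ b ↦ b ⊗ a` as an algebra map. -/
def swapT : H ⊗[k] H →ₐ[k] H ⊗[k] H := (Algebra.TensorProduct.comm k H H).toAlgHom

/-- A quasitriangular structure on the bialgebra `H`. -/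
structure QT where
  R : H ⊗[k] H
  Rinv : H ⊗[k] H
  mul_inv : R * Rinv = 1
  inv_mul : Rinv * R = 1
  quasi_cocomm : ∀ h : H, swapT k H (Coalgebra.comul (R := k) h) * R = R * Coalgebra.comul (R := k) h
  hex1 : idComul k H R = leg13 k H R * leg12 k H R
  hex2 : comulId k H R = leg13 k H R * leg23 k H R

/-- A pre-Cartier quasitriangular bialgebra structure on `H`. -/
structure PreCartier extends QT k H where
  χ : H ⊗[k] H
  chi_comm : ∀ h : H, χ * Coalgebra.comul (R := k) h = Coalgebra.comul (R := k) h * χ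
  chi_hex1 : idComul k H χ = leg12 k H χ + leg12 k H Rinv * leg13 k H χ * leg12 k H R
  chi_hex2 : comulId k H χ = leg23 k H χ + leg23 k H Rinv * leg13 k H χ * leg23 k H R

/-!
Apply the flip τ₂₃ of the last two legs to `(Id ⊗ Δ)(χ) = χ₁₂ + R₁₂⁻¹χ₁₃R₁₂`. Quasi-cocommutativity
turns the left side into `R₂₃ (Id ⊗ Δ)(χ) R₂₃⁻¹`, while the right side becomes
`χ₁₃ + R₁₃⁻¹χ₁₂R₁₃`. Since `χ` commutes with `Δ(H)`, `χ₁₂` commutes with `(Δ ⊗ Id)(R) = R₁₃R₂₃`,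
i.e. `R₂₃χ₁₂R₂₃⁻¹ = R₁₃⁻¹χ₁₂R₁₃`. Cancelling this term leaves `R₂₃ R₁₂⁻¹χ₁₃R₁₂ R₂₃⁻¹ = χ₁₃`.
-/

section ConjugatePair

variable {M : Type*} [Monoid M] {u v x y : M}

theorem eq_mul_mul_of_mul_eq_mul (huv : u * v = 1) (h : x * u = u * y) : x = u * y * v := by
  rw [← h, mul_assoc, huv, mul_one]

theorem eq_mul_mul_of_mul_mul_eq (hvu : v * u = 1) (h : u * x * v = y) : x = v * y * u := by
  simp only [← h, ← mul_assoc, hvu, one_mul]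
  simp only [mul_assoc, hvu, mul_one]

theorem mul_mul_eq_of_commute_mul {a a' b b' : M} (ha : a' * a = 1) (hb : b * b' = 1)
    (h : Commute x (a * b)) : b * x * b' = a' * x * a :=
  calc b * x * b' = a' * (a * b * x) * b' := by simp only [← mul_assoc, ha, one_mul]
    _ = a' * (x * (a * b)) * b' := by rw [h.eq]
    _ = a' * x * a := by simp only [mul_assoc, hb, mul_one]

end ConjugatePair

def flip23 : H ⊗[k] (H ⊗[k] H) →ₐ[k] H ⊗[k] (H ⊗[k] H) :=
  Algebra.TensorProduct.map (AlgHom.id k H) (swapT k H)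

section Legs

variable {k H}

theorem flip23_leg12 (z : H ⊗[k] H) : flip23 k H (leg12 k H z) = leg13 k H z := by
  have : (flip23 k H).comp (leg12 k H) = leg13 k H := by
    ext <;> simp [flip23, leg12, leg13, swapT, Algebra.TensorProduct.one_def]
  exact DFunLike.congr_fun this z

theorem flip23_leg13 (z : H ⊗[k] H) : flip23 k H (leg13 k H z) = leg12 k H z := by
  have : (flip23 k H).comp (leg13 k H) = leg12 k H := by
    ext <;> simp [flip23, leg12, leg13, swapT, Algebra.TensorProduct.one_def]
  exact DFunLike.congr_fun this z

theorem QT.swapT_comul (Q : QT k H) (h : H) :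
    swapT k H (Coalgebra.comul (R := k) h) = Q.R * Coalgebra.comul (R := k) h * Q.Rinv :=
  eq_mul_mul_of_mul_eq_mul Q.mul_inv (Q.quasi_cocomm h)

theorem QT.flip23_idComul (Q : QT k H) (z : H ⊗[k] H) :
    flip23 k H (idComul k H z) = leg23 k H Q.R * idComul k H z * leg23 k H Q.Rinv := by
  induction z using TensorProduct.induction_on with
  | zero => simp
  | tmul a b =>
    simp [flip23, idComul, leg23, Q.swapT_comul, Algebra.TensorProduct.tmul_mul_tmul]
  | add x y hx hy => simp only [map_add, hx, hy, mul_add, add_mul]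

theorem leg12_eq_assoc_tmul_one (x : H ⊗[k] H) :
    leg12 k H x = Algebra.TensorProduct.assoc k k k H H H (x ⊗ₜ[k] 1) := by
  have : leg12 k H = (Algebra.TensorProduct.assoc k k k H H H).toAlgHom.comp
      Algebra.TensorProduct.includeLeft := by
    ext <;> simp [leg12, Algebra.TensorProduct.one_def]
  exact DFunLike.congr_fun this x

theorem commute_leg12_comulId {x : H ⊗[k] H}
    (hx : ∀ h : H, Commute x (Coalgebra.comul (R := k) h)) (z : H ⊗[k] H) :
    Commute (leg12 k H x) (comulId k H z) := by
  rw [leg12_eq_assoc_tmul_one]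
  refine Commute.map ?_ (Algebra.TensorProduct.assoc k k k H H H)
  induction z using TensorProduct.induction_on with
  | zero => exact Commute.zero_right _
  | tmul a b => exact (hx a).tmul (Commute.one_left b)
  | add z w hz hw => simpa only [map_add] using hz.add_right hw

end Legs

/-- for a pre-Cartier quasitriangular bialgebra,
`R₁₂⁻¹ χ₁₃ R₁₂ = R₂₃⁻¹ χ₁₃ R₂₃` in `H ⊗ H ⊗ H`. -/
theorem conjugate_chi13_eq (P : PreCartier k H) :
    leg12 k H P.Rinv * leg13 k H P.χ * leg12 k H P.R =
      leg23 k H P.Rinv * leg13 k H P.χ * leg23 k H P.R := by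
  have hR₂₃ : leg23 k H P.R * leg23 k H P.Rinv = 1 := by rw [← map_mul, P.mul_inv, map_one]
  have hR₂₃' : leg23 k H P.Rinv * leg23 k H P.R = 1 := by rw [← map_mul, P.inv_mul, map_one]
  have hR₁₃' : leg13 k H P.Rinv * leg13 k H P.R = 1 := by rw [← map_mul, P.inv_mul, map_one]
  have hχ₁₂ : leg23 k H P.R * leg12 k H P.χ * leg23 k H P.Rinv =
      leg13 k H P.Rinv * leg12 k H P.χ * leg13 k H P.R := by
    refine mul_mul_eq_of_commute_mul hR₁₃' hR₂₃ ?_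
    rw [← P.hex2]
    exact commute_leg12_comulId P.chi_comm P.R
  have hflip := P.flip23_idComul P.χ
  simp only [P.chi_hex1, map_add, map_mul, flip23_leg12, flip23_leg13] at hflip
  rw [mul_add, add_mul, hχ₁₂, add_comm] at hflip
  exact eq_mul_mul_of_mul_mul_eq hR₂₃' (add_left_cancel hflip).symm

end
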